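/- arXiv:1903.07490 — 7 statements merged into one kernel-verified Lean document; each statement's English description precedes it below -/
import Mathlib

section
/- Let F(m,n) be defined for natural numbers m,n by the double recurrence F(m,n) = F(m-1,n-1) + F(m-2,n-2) for m,n ≥ 2, with initial conditions F(m,0) = F_m, F(m,1) = F_{m+1}, F(0,n) = F_n, F(1,n) = F_{n+1}, where F_k denotes the k-th Fibonacci number. Then for all m,n ∈ ℕ, setting k = min{m,n}, we have F(m,n) = F_k · F_{|m-n|+2} + F_{k-1} · F_{|m-n|} (where for k = 0 the term F_{k-1}·F_{|m-n|} is interpreted with F_{-1} = 1, equivalently the formula holds for k ≥ 1 and F(m,0) = F_m, F(0,n) = F_n). -/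
/-!
Along each diagonal the sequence `k ↦ F(k, k + d)` (likewise `k ↦ F(k + d, k)`) obeys the Fibonacci recurrence and
starts with `F(0, d) = F_d`, `F(1, d + 1) = F_{d+2}`; every such sequence is
`g (k + 1) = F_{k+1} g 1 + F_k g 0`.
-/

/-- Double-recurrence Fibonacci numbers. -/
def dF : ℕ → ℕ → ℕ
  | m, 0 => Nat.fib m
  | m, 1 => Nat.fib (m + 1)
  | 0, n => Nat.fib n
  | 1, n => Nat.fib (n + 1)
  | m + 2, n + 2 => dF (m + 1) (n + 1) + dF m n

theorem Nat.eq_fib_mul_add_fib_mul_of_fib_recurrence {R : Type*} [CommSemiring R] {g : ℕ → R}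
    (hg : ∀ k, g (k + 2) = g (k + 1) + g k) :
    ∀ k, g (k + 1) = Nat.fib (k + 1) * g 1 + Nat.fib k * g 0 := by
  refine Nat.twoStepInduction (by simp) (by simp [hg]) fun k ih₀ ih₁ => ?_
  rw [hg, ih₀, ih₁, Nat.fib_add_two (n := k + 1), Nat.fib_add_two (n := k)]
  push_cast
  ring

namespace dF

theorem zero_right (m : ℕ) : dF m 0 = Nat.fib m := by
  rcases m with _ | _ | _ <;> rfl

theorem one_right (m : ℕ) : dF m 1 = Nat.fib (m + 1) := by
  rcases m with _ | _ | _ <;> rfl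

theorem zero_left (n : ℕ) : dF 0 n = Nat.fib n := by
  rcases n with _ | _ | _ <;> rfl

theorem one_left (n : ℕ) : dF 1 n = Nat.fib (n + 1) := by
  rcases n with _ | _ | _ <;> rfl

theorem add_two_add_two (m n : ℕ) : dF (m + 2) (n + 2) = dF (m + 1) (n + 1) + dF m n := rfl

theorem add_one_add_one_add (k d : ℕ) :
    dF (k + 1) (k + 1 + d) = Nat.fib (k + 1) * Nat.fib (d + 2) + Nat.fib k * Nat.fib d := by
  have hrec : ∀ k, dF (k + 2) (k + 2 + d) = dF (k + 1) (k + 1 + d) + dF k (k + d) := fun k => by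
    rw [Nat.add_right_comm k 2, Nat.add_right_comm k 1, add_two_add_two]
  have := Nat.eq_fib_mul_add_fib_mul_of_fib_recurrence (g := fun k => dF k (k + d)) hrec k
  simpa only [Nat.cast_id, zero_add, zero_left, add_comm 1 d, one_left] using this

theorem add_add_one_add_one (k d : ℕ) :
    dF (k + 1 + d) (k + 1) = Nat.fib (k + 1) * Nat.fib (d + 2) + Nat.fib k * Nat.fib d := by
  have hrec : ∀ k, dF (k + 2 + d) (k + 2) = dF (k + 1 + d) (k + 1) + dF (k + d) k := fun k => by
    rw [Nat.add_right_comm k 2, Nat.add_right_comm k 1, add_two_add_two]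
  have := Nat.eq_fib_mul_add_fib_mul_of_fib_recurrence (g := fun k => dF (k + d) k) hrec k
  simpa only [Nat.cast_id, zero_add, zero_right, add_comm 1 d, one_right] using this

end dF

theorem stmt_0 :
    (∀ m n : ℕ, 1 ≤ min m n →
      dF m n = Nat.fib (min m n) * Nat.fib (Nat.dist m n + 2) +
        Nat.fib (min m n - 1) * Nat.fib (Nat.dist m n)) ∧
    (∀ m : ℕ, dF m 0 = Nat.fib m) ∧ (∀ n : ℕ, dF 0 n = Nat.fib n) := by
  refine ⟨fun m n hmin => ?_, dF.zero_right, dF.zero_left⟩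
  rcases le_total m n with hle | hle
  · obtain ⟨k, rfl⟩ : ∃ k, m = k + 1 := ⟨m - 1, by omega⟩
    obtain ⟨d, rfl⟩ := Nat.exists_eq_add_of_le hle
    rw [min_eq_left hle, Nat.dist_eq_sub_of_le hle, Nat.add_sub_cancel_left, Nat.add_sub_cancel,
      dF.add_one_add_one_add]
  · obtain ⟨k, rfl⟩ : ∃ k, n = k + 1 := ⟨n - 1, by omega⟩
    obtain ⟨d, rfl⟩ := Nat.exists_eq_add_of_le hle
    rw [min_eq_right hle, Nat.dist_eq_sub_of_le_right hle, Nat.add_sub_cancel_left,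
      Nat.add_sub_cancel, dF.add_add_one_add_one]
end

section
/- Let F(m,n) be the double-recurrence Fibonacci numbers. Then for all k ∈ ℕ and all 0 ≤ i ≤ k, F(k,i) = F(k,k-i). -/
/-! Along each diagonal `m = n + d` the double recurrence is the ordinary Fibonacci recurrence in `n`,
so `F(n + d, n) = F_d F_{n+1} + F_{d+1} F_n`. The right-hand side equals `F(n + d, d)` as well,
which is the symmetry `F(k, i) = F(k, k - i)`. -/

open Nat

theorem dF_add_self (n d : ℕ) : dF (n + d) n = fib d * fib (n + 1) + fib (d + 1) * fib n := by
  induction n using Nat.twoStepInduction with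
  | zero => simp [dF]
  | one => rw [add_comm, dF, fib_add_two]; simp
  | more n ih₀ ih₁ =>
    rw [show n + 2 + d = n + d + 2 by omega, dF, show n + d + 1 = n + 1 + d by omega, ih₀, ih₁,
      fib_add_two, fib_add_two, fib_add_two]
    ring

theorem stmt_2 : ∀ k i : ℕ, i ≤ k → dF k i = dF k (k - i) := by
  intro k i hik
  obtain ⟨d, rfl⟩ := Nat.exists_eq_add_of_le hik
  rw [Nat.add_sub_cancel_left, dF_add_self, add_comm i d, dF_add_self]
  ring
end

section
/- For all i ∈ ℕ, 5·∑_{j=0}^{i} F_j · F_{i-j} = i·L_i − F_i, where F_k is the k-th Fibonacci number and L_k is the k-th Lucas number. -/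
/-!
Write `C n = ∑_{j ≤ n} F_j F_{n-j}`. Splitting `F_{n+2-j} = F_{n+1-j} + F_{n-j}` gives the
inhomogeneous recurrence `C (n+2) = C (n+1) + C n + F_{n+1}`, and `(n L_n - F_n) / 5` satisfies the
same recurrence because `L_n + L_{n+2} = 5 F_{n+1}`.
-/

/-- Lucas numbers. -/
def luc : ℕ → ℕ
  | 0 => 2
  | 1 => 1
  | n + 2 => luc (n + 1) + luc n

open Finset Nat

theorem luc_add_two (n : ℕ) : luc (n + 2) = luc (n + 1) + luc n := rfl

theorem luc_add_luc_add_two (n : ℕ) : luc n + luc (n + 2) = 5 * fib (n + 1) := by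
  induction n using Nat.twoStepInduction with
  | zero => rfl
  | one => rfl
  | more n ih₀ ih₁ =>
    change luc (n + 1) + luc (n + 3) = 5 * fib (n + 2) at ih₁
    change luc (n + 2) + luc (n + 4) = 5 * fib (n + 3)
    have h₂ : luc (n + 2) = luc (n + 1) + luc n := rfl
    have h₃ : luc (n + 3) = luc (n + 2) + luc (n + 1) := rfl
    have h₄ : luc (n + 4) = luc (n + 3) + luc (n + 2) := rfl
    have hF : fib (n + 3) = fib (n + 1) + fib (n + 2) := fib_add_two
    omega

theorem sum_mul_fib_sub_add_two (a : ℕ → ℕ) (n : ℕ) :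
    ∑ j ∈ range (n + 3), a j * fib (n + 2 - j) =
      ∑ j ∈ range (n + 2), a j * fib (n + 1 - j) + ∑ j ∈ range (n + 1), a j * fib (n - j) +
        a (n + 1) := by
  have split : ∀ j ∈ range (n + 1),
      a j * fib (n + 2 - j) = a j * fib (n + 1 - j) + a j * fib (n - j) := by
    intro j hj
    rw [show n + 2 - j = n - j + 2 by grind, show n + 1 - j = n - j + 1 by grind, fib_add_two,
      mul_add, add_comm]
  rw [sum_range_succ, sum_range_succ, sum_range_succ (n := n + 1), sum_congr rfl split,
    sum_add_distrib]
  simp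

theorem five_mul_sum_fib_mul_fib_sub_add_fib (n : ℕ) :
    5 * ∑ j ∈ range (n + 1), fib j * fib (n - j) + fib n = n * luc n := by
  induction n using Nat.twoStepInduction with
  | zero => rfl
  | one => rfl
  | more n ih₀ ih₁ =>
    change 5 * ∑ j ∈ range (n + 2), fib j * fib (n + 1 - j) + fib (n + 1) = (n + 1) * luc (n + 1)
      at ih₁
    have hL := luc_add_luc_add_two n
    rw [luc_add_two] at hL
    rw [sum_mul_fib_sub_add_two, luc_add_two, fib_add_two]
    linarith

theorem stmt_7 : ∀ i : ℕ,
    5 * ∑ j ∈ Finset.range (i + 1), (Nat.fib j : ℤ) * Nat.fib (i - j) =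
      i * luc i - Nat.fib i := by
  intro i
  have h := congrArg (Nat.cast : ℕ → ℤ) (five_mul_sum_fib_mul_fib_sub_add_fib i)
  push_cast at h
  linarith
end

section
/- For all i ∈ ℕ, 5·∑_{j=0}^{i} F_j · F_{i-j} = (i−1)·F_i + 2i·F_{i-1} (for i ≥ 1), i.e., the Fibonacci self-convolution satisfies ∑_{j=0}^{i} F_j F_{i-j} = ((i−1)F_i + 2iF_{i-1})/5. -/
/-!
Splitting `F_{n+2-j} = F_{n+1-j} + F_{n-j}` in each term shows that the self-convolution
`c n = ∑_{j ≤ n} F_j F_{n-j}` satisfies the Fibonacci recurrence up to a forcing term,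
`c (n + 2) = c (n + 1) + c n + F_{n+1}`, and the closed form then follows by two-step induction.
-/

open Finset

namespace Nat

def fibConv (n : ℕ) : ℕ :=
  ∑ j ∈ range (n + 1), fib j * fib (n - j)

theorem fibConv_add_two (n : ℕ) :
    fibConv (n + 2) = fibConv (n + 1) + fibConv n + fib (n + 1) := by
  have split : ∀ j ∈ range (n + 1),
      fib j * fib (n + 2 - j) = fib j * fib (n + 1 - j) + fib j * fib (n - j) := by
    intro j hj
    rw [show n + 2 - j = n - j + 2 by grind, show n + 1 - j = n - j + 1 by grind, fib_add_two,
      mul_add, add_comm]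
  simp only [fibConv, sum_range_succ (n := n + 2), sum_range_succ (n := n + 1),
    sum_congr rfl split, sum_add_distrib]
  simp

theorem five_mul_fibConv_succ (n : ℕ) :
    5 * fibConv (n + 1) = n * fib (n + 1) + 2 * (n + 1) * fib n := by
  induction n using Nat.twoStepInduction with
  | zero | one => simp [fibConv, sum_range_succ]
  | more n ih ih' =>
    rw [fibConv_add_two, mul_add, mul_add, ih, ih', fib_add_two (n := n + 1), fib_add_two]
    ring

end Nat

theorem stmt_8 : ∀ i : ℕ, 1 ≤ i →
    5 * ∑ j ∈ Finset.range (i + 1), (Nat.fib j : ℤ) * Nat.fib (i - j) =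
      ((i : ℤ) - 1) * Nat.fib i + 2 * i * Nat.fib (i - 1) := by
  intro i hi
  obtain ⟨n, rfl⟩ : ∃ n, i = n + 1 := ⟨i - 1, by omega⟩
  have h := congrArg (Nat.cast : ℕ → ℤ) (Nat.five_mul_fibConv_succ n)
  push_cast [Nat.fibConv] at h
  simpa using h
end

section
/- Let F(i,j) be the double-recurrence Fibonacci numbers. Then for all m ∈ ℕ, 5·∑_{i=0}^{m} ∑_{j=0}^{m} F(i,j) = 4·(m·L_{m+3} − L_{m+4} + 2·F_{m+2}) − 5·F_{m+2} + 25, where L_k is the k-th Lucas number and F_k the k-th Fibonacci number. -/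
open Finset Nat

theorem luc_add_fib (n : ℕ) : luc n + fib n = 2 * fib (n + 1) := by
  induction n using Nat.twoStepInduction with
  | zero => rfl
  | one => rfl
  | more n ih₁ ih₂ =>
    rw [luc]
    simp only [fib_add_two] at *
    linear_combination ih₁ + ih₂

theorem dF_zero_left (n : ℕ) : dF 0 n = fib n := by
  rcases n with _ | _ | n <;> rfl

theorem dF_one_left (n : ℕ) : dF 1 n = fib (n + 1) := by
  rcases n with _ | _ | n <;> rfl

theorem dF_add_two_add_two (m n : ℕ) : dF (m + 2) (n + 2) = dF (m + 1) (n + 1) + dF m n := rfl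

theorem dF_comm (m n : ℕ) : dF m n = dF n m := by
  induction m, n using dF.induct with
  | case1 m => rw [dF, dF_zero_left]
  | case2 m => rw [dF, dF_one_left]
  | case3 n _ _ => rw [dF, dF_zero_left]
  | case4 n _ _ => rw [dF, dF_one_left]
  | case5 m n ih₁ ih₂ => rw [dF_add_two_add_two, dF_add_two_add_two, ih₁, ih₂]

theorem dF_self (n : ℕ) : dF n n = fib n := by
  induction n using Nat.twoStepInduction with
  | zero => rfl
  | one => rfl
  | more n ih₁ ih₂ => rw [dF_add_two_add_two, ih₁, ih₂, fib_add_two, add_comm]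

def dFRowSum (n : ℕ) : ℕ := ∑ j ∈ range n, dF n j

theorem dFRowSum_add_two (n : ℕ) :
    dFRowSum (n + 2) = dFRowSum (n + 1) + dFRowSum n + 2 * fib (n + 2) := by
  have hrow : dFRowSum (n + 1) = ∑ j ∈ range n, dF (n + 1) (j + 1) + fib (n + 1) := by
    rw [dFRowSum, sum_range_succ']; rfl
  rw [dFRowSum, sum_range_succ', sum_range_succ']
  simp only [dF_add_two_add_two, sum_add_distrib]
  rw [← dFRowSum, hrow]
  simp only [dF, fib_add_two]
  ring

theorem five_mul_dFRowSum_add_fib (n : ℕ) :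
    5 * dFRowSum n + fib n = n * (luc n + 5 * fib n) := by
  induction n using Nat.twoStepInduction with
  | zero => rfl
  | one => rfl
  | more n ih₁ ih₂ =>
    have hL₁ := luc_add_fib n
    have hL₂ := luc_add_fib (n + 1)
    rw [dFRowSum_add_two, luc]
    simp only [fib_add_two] at *
    linear_combination ih₁ + ih₂ - 2 * hL₁ - hL₂

theorem sum_range_succ_sum_range_succ_of_symm {M : Type*} [AddCommMonoid M] (f : ℕ → ℕ → M)
    (hf : ∀ i j, f i j = f j i) (n : ℕ) :
    ∑ i ∈ range (n + 1), ∑ j ∈ range (n + 1), f i j =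
      ∑ i ∈ range n, ∑ j ∈ range n, f i j + 2 • ∑ j ∈ range n, f n j + f n n := by
  simp only [sum_range_succ, sum_add_distrib, two_nsmul, hf _ n]
  abel

theorem stmt_11 : ∀ m : ℕ,
    5 * ∑ i ∈ Finset.range (m + 1), ∑ j ∈ Finset.range (m + 1), (dF i j : ℤ) =
      4 * ((m : ℤ) * luc (m + 3) - luc (m + 4) + 2 * Nat.fib (m + 2)) -
        5 * Nat.fib (m + 2) + 25 := by
  intro m
  induction m with
  | zero => rfl
  | succ m ih =>
    have hR : 5 * (dFRowSum (m + 1) : ℤ) + fib (m + 1) =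
        (m + 1) * (luc (m + 1) + 5 * fib (m + 1)) := by
      exact_mod_cast five_mul_dFRowSum_add_fib (m + 1)
    have hL (n : ℕ) : (luc n : ℤ) = 2 * fib (n + 1) - fib n :=
      eq_sub_of_add_eq (by exact_mod_cast luc_add_fib n)
    rw [sum_range_succ_sum_range_succ_of_symm _ (fun i j => by rw [dF_comm]), dF_self,
      ← Nat.cast_sum, ← dFRowSum]
    simp only [hL, fib_add_two] at ih hR ⊢
    push_cast at ih hR ⊢
    linear_combination ih + 2 * hR
end

section
/- Let H(m,n) be a spin function: H(m,n) = H(m-1,n-1) + H(m-2,n-2) for m,n ≥ 2, where H(m,0) = H₁(m), H(m,1) = H₁²(m), H(0,n) = H₂(n), H(1,n) = H₂¹(n), and H₁, H₁², H₂, H₂¹ are sequences satisfying the Fibonacci recurrence x(k+2) = x(k+1) + x(k) with H₁(0) = H₂(0) = a, H₁(1) = H₂(1) = b, H₁²(0) = H₂¹(0) = d, H₁²(1) = H₂¹(1) = c. Then for all m, n with 1 ≤ n ≤ m − 1, H(m,n) = F_n·H₁²(m−n+1) + F_{n−1}·H₁(m−n), where F_k is the k-th Fibonacci number. -/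
/-! Along each diagonal `k ↦ H (j + k) k` the double recurrence is the Fibonacci recurrence, so
every term of the diagonal is the Fibonacci combination of its first two terms
`H j 0 = H₁ j` and `H (j + 1) 1 = H₁₂ (j + 1)`. -/

theorem apply_succ_eq_fib_mul_add_fib_mul {R : Type*} [CommSemiring R] {u : ℕ → R}
    (h : ∀ k, u (k + 2) = u (k + 1) + u k) :
    ∀ n, u (n + 1) = Nat.fib (n + 1) * u 1 + Nat.fib n * u 0
  | 0 => by simp
  | 1 => by simp [h 0]
  | n + 2 => by
    rw [h (n + 1), apply_succ_eq_fib_mul_add_fib_mul h (n + 1),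
      apply_succ_eq_fib_mul_add_fib_mul h n,
      Nat.fib_add_two (n := n + 1), Nat.fib_add_two (n := n)]
    push_cast
    ring

theorem diag_apply_eq_fib_mul_add_fib_mul {R : Type*} [CommSemiring R] {H : ℕ → ℕ → R}
    (hrec : ∀ m n, H (m + 2) (n + 2) = H (m + 1) (n + 1) + H m n) (j k : ℕ) :
    H (j + k + 1) (k + 1) = Nat.fib (k + 1) * H (j + 1) 1 + Nat.fib k * H j 0 :=
  apply_succ_eq_fib_mul_add_fib_mul (u := fun k => H (j + k) k) (fun k => hrec (j + k) k) k

theorem stmt_14_general (H : ℕ → ℕ → ℤ) (H₁ H₁₂ : ℕ → ℤ)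
    (hrec : ∀ m n : ℕ, H (m + 2) (n + 2) = H (m + 1) (n + 1) + H m n)
    (hb1 : ∀ m : ℕ, H m 0 = H₁ m) (hb2 : ∀ m : ℕ, H m 1 = H₁₂ m) :
    ∀ m n : ℕ, 1 ≤ n → n + 1 ≤ m →
      H m n = Nat.fib n * H₁₂ (m - n + 1) + Nat.fib (n - 1) * H₁ (m - n) := by
  intro m n hn hnm
  obtain ⟨k, rfl⟩ : ∃ k, n = k + 1 := ⟨n - 1, by omega⟩
  obtain ⟨j, rfl⟩ : ∃ j, m = j + k + 1 := ⟨m - (k + 1), by omega⟩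
  rw [show j + k + 1 - (k + 1) = j by omega, Nat.add_sub_cancel, ← hb1, ← hb2]
  exact diag_apply_eq_fib_mul_add_fib_mul hrec j k

theorem stmt_14 (a b c d : ℤ) (H : ℕ → ℕ → ℤ) (H₁ H₁₂ H₂ H₂₁ : ℕ → ℤ)
    (hrec : ∀ m n : ℕ, H (m + 2) (n + 2) = H (m + 1) (n + 1) + H m n)
    (hb1 : ∀ m : ℕ, H m 0 = H₁ m) (hb2 : ∀ m : ℕ, H m 1 = H₁₂ m)
    (hb3 : ∀ n : ℕ, H 0 n = H₂ n) (hb4 : ∀ n : ℕ, H 1 n = H₂₁ n)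
    (hr1 : ∀ k : ℕ, H₁ (k + 2) = H₁ (k + 1) + H₁ k)
    (hr2 : ∀ k : ℕ, H₁₂ (k + 2) = H₁₂ (k + 1) + H₁₂ k)
    (hr3 : ∀ k : ℕ, H₂ (k + 2) = H₂ (k + 1) + H₂ k)
    (hr4 : ∀ k : ℕ, H₂₁ (k + 2) = H₂₁ (k + 1) + H₂₁ k)
    (hv1 : H₁ 0 = a) (hv2 : H₂ 0 = a) (hv3 : H₁ 1 = b) (hv4 : H₂ 1 = b)
    (hv5 : H₁₂ 0 = d) (hv6 : H₂₁ 0 = d) (hv7 : H₁₂ 1 = c) (hv8 : H₂₁ 1 = c) :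
    ∀ m n : ℕ, 1 ≤ n → n + 1 ≤ m →
      H m n = Nat.fib n * H₁₂ (m - n + 1) + Nat.fib (n - 1) * H₁ (m - n) :=
  stmt_14_general H H₁ H₁₂ hrec hb1 hb2
end

section
/- For all m ∈ ℕ, ∑_{i=0}^{m} ∑_{j=0}^{i} (F_i + F_j·F_{i−j}) = ∑_{0 ≤ j ≤ i ≤ m} F(i,j), where F(i,j) are the double-recurrence Fibonacci numbers. Equivalently, for 0 ≤ j ≤ i, F(i,j) = F_i + F_j·F_{i−j}. -/
theorem dF_add_eq : ∀ n k : ℕ, dF (n + k) n = Nat.fib (n + k) + Nat.fib n * Nat.fib k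
  | 0, k => by simp [dF]
  | 1, k => by
    rw [show dF (1 + k) 1 = Nat.fib (k + 2) by simp [dF, Nat.add_comm, Nat.add_left_comm], Nat.fib_add_two]
    simp [Nat.add_comm]
  | n + 2, k => by
    have hrec : dF (n + 2 + k) (n + 2) = dF (n + 1 + k) (n + 1) + dF (n + k) n := by
      rw [show n + 2 + k = n + k + 2 by omega, show n + 1 + k = n + k + 1 by omega]
      rfl
    rw [hrec, dF_add_eq (n + 1) k, dF_add_eq n k, show n + 2 + k = n + k + 2 by omega,
      show n + 1 + k = n + k + 1 by omega, Nat.fib_add_two, Nat.fib_add_two]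
    ring

theorem dF_eq_of_le {i j : ℕ} (hji : j ≤ i) :
    dF i j = Nat.fib i + Nat.fib j * Nat.fib (i - j) := by
  obtain ⟨k, rfl⟩ := Nat.exists_eq_add_of_le hji
  rw [dF_add_eq, Nat.add_sub_cancel_left]

theorem stmt_17 :
    (∀ m : ℕ,
      ∑ i ∈ Finset.range (m + 1), ∑ j ∈ Finset.range (i + 1),
          ((Nat.fib i : ℕ) + Nat.fib j * Nat.fib (i - j)) =
        ∑ i ∈ Finset.range (m + 1), ∑ j ∈ Finset.range (i + 1), dF i j) ∧
    (∀ i j : ℕ, j ≤ i → dF i j = Nat.fib i + Nat.fib j * Nat.fib (i - j)) := by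
  refine ⟨fun m => Finset.sum_congr rfl fun i _ => Finset.sum_congr rfl fun j hj => ?_,
    fun i j => dF_eq_of_le⟩
  exact (dF_eq_of_le (Nat.lt_succ_iff.mp (Finset.mem_range.mp hj))).symm
end
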